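/- Let A⁺, A⁻ : ℝ → ℝ and u⁺, u⁻, û, c ∈ ℝ. Assume the Rankine–Hugoniot condition A⁺(u⁺) = A⁻(u⁻) and that the Kruzkov entropy inequality holds at c. Then: (v) if û ≤ u⁺ < c < u⁻, then A⁻(c) ≤ A⁻(u⁻) (equivalently, by the Rankine–Hugoniot condition, A⁻(c) ≤ A⁺(u⁺)); (vi) if û < c < u⁺ ≤ u⁻, then A⁻(c) ≤ A⁺(c). -/

import Mathlib

open MeasureTheory Filter Set

/-- The Kruzkov entropy inequality at `c` for data `(um, up, uh)`:
`A⁺(u⁺)·sign(u⁺−c) − 2·sign(u⁺−û)·A⁺(c)·𝟙_{(û,u⁺)}(c) ≤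
 A⁻(u⁻)·sign(u⁻−c) − 2·sign(u⁻−û)·A⁻(c)·𝟙_{(û,u⁻)}(c)`. -/
def KruzkovIneq (Ap Am : ℝ → ℝ) (um up uh c : ℝ) : Prop :=
  Ap up * Real.sign (up - c) -
      2 * Real.sign (up - uh) * Ap c * Set.indicator (Set.uIoo uh up) (1 : ℝ → ℝ) c
    ≤ Am um * Real.sign (um - c) -
      2 * Real.sign (um - uh) * Am c * Set.indicator (Set.uIoo uh um) (1 : ℝ → ℝ) c

noncomputable def kruzkovSide (A : ℝ → ℝ) (u uh c : ℝ) : ℝ :=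
  A u * Real.sign (u - c) - 2 * Real.sign (u - uh) * A c * Set.indicator (Set.uIoo uh u) 1 c

theorem kruzkovIneq_iff {Ap Am : ℝ → ℝ} {um up uh c : ℝ} :
    KruzkovIneq Ap Am um up uh c ↔ kruzkovSide Ap up uh c ≤ kruzkovSide Am um uh c :=
  Iff.rfl

section kruzkovSide

variable {A : ℝ → ℝ} {u uh c : ℝ}

theorem kruzkovSide_of_lt_of_le (hu : u < c) (huh : uh ≤ c) :
    kruzkovSide A u uh c = -A u := by
  have hc : c ∉ uIoo uh u := fun h => h.2.not_ge (sup_le huh hu.le)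
  simp [kruzkovSide, Real.sign_of_neg (sub_neg.2 hu), indicator_of_notMem hc]

theorem kruzkovSide_of_lt_of_lt (huh : uh < c) (hu : c < u) :
    kruzkovSide A u uh c = A u - 2 * A c := by
  simp [kruzkovSide, Real.sign_of_pos (sub_pos.2 hu), Real.sign_of_pos (sub_pos.2 (huh.trans hu)),
    indicator_of_mem (mem_uIoo_of_lt huh hu)]

end kruzkovSide

theorem stmt_11 (Ap Am : ℝ → ℝ) (up um uh c : ℝ)
    (hRH : Ap up = Am um)
    (hkruz : KruzkovIneq Ap Am um up uh c) :
    (uh ≤ up → up < c → c < um → Am c ≤ Am um ∧ Am c ≤ Ap up) ∧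
    (uh < c → c < up → up ≤ um → Am c ≤ Ap c) := by
  rw [kruzkovIneq_iff] at hkruz
  refine ⟨fun huh hup hum => ?_, fun huh hup hum => ?_⟩
  · have huh' : uh < c := huh.trans_lt hup
    rw [kruzkovSide_of_lt_of_le hup huh'.le, kruzkovSide_of_lt_of_lt huh' hum] at hkruz
    constructor <;> linarith
  · rw [kruzkovSide_of_lt_of_lt huh hup, kruzkovSide_of_lt_of_lt huh (hup.trans_le hum)] at hkruz
    linarith
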